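/- arXiv:2508.02985 — 4 statements merged into one kernel-verified Lean document; each statement's English description precedes it below -/
import Mathlib

section
/- For every integer ℓ ≥ 2, if G is a finite C_{ℓ+1}-free simple graph and v is any vertex of G, then the subgraph of G induced by the open neighbourhood N(v) is (ℓ−2)-degenerate. -/
open SimpleGraph

/-- `σ` is a proper colouring of `G` with colours in `ℕ`. -/
def IsProperColoring {V : Type*} (G : SimpleGraph V) (σ : V → ℕ) : Prop :=
  ∀ ⦃u v : V⦄, G.Adj u v → σ u ≠ σ v

/-- The chromatic number of `G`, as a natural number. -/
noncomputable def chromNum {V : Type*} (G : SimpleGraph V) : ℕ :=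
  sInf {n : ℕ | G.Colorable n}

/-- The discrepancy `φ_σ(G)` of a proper colouring `σ` of `G`: the maximum, over all
induced subgraphs `G[S]` of `G`, of `|σ(S)| - χ(G[S])`. -/
noncomputable def colDisc {V : Type*} (G : SimpleGraph V) (σ : V → ℕ) : ℤ :=
  sSup {z : ℤ | ∃ S : Set V, z = ((σ '' S).ncard : ℤ) - (chromNum (G.induce S) : ℤ)}

/-- The chromatic discrepancy `φ(G)`: the minimum of `φ_σ(G)` over all proper
colourings `σ` of `G`. -/
noncomputable def chromDisc {V : Type*} (G : SimpleGraph V) : ℤ :=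
  sInf {z : ℤ | ∃ σ : V → ℕ, IsProperColoring G σ ∧ z = colDisc G σ}

/-- `G` is locally `s`-colourable: the closed neighbourhood of every vertex induces an
`s`-colourable subgraph. -/
def LocallyColorable {V : Type*} (G : SimpleGraph V) (s : ℕ) : Prop :=
  ∀ v : V, chromNum (G.induce (insert v (G.neighborSet v))) ≤ s

/-- The set of vertices at distance at most `r` from `v` in `G`. -/
def ballSet {V : Type*} (G : SimpleGraph V) (v : V) (r : ℕ) : Set V :=
  {u : V | ∃ w : G.Walk v u, w.length ≤ r}

/-- `G` is `r`-locally `s`-colourable: every ball of radius `r` induces an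
`s`-colourable subgraph. -/
def RLocallyColorable {V : Type*} (G : SimpleGraph V) (r s : ℕ) : Prop :=
  ∀ v : V, chromNum (G.induce (ballSet G v r)) ≤ s

/-- `G` contains no cycle of length exactly `n` as a (not necessarily induced) subgraph. -/
def CycleLenFree {V : Type*} (G : SimpleGraph V) (n : ℕ) : Prop :=
  ∀ (v : V) (w : G.Walk v v), w.IsCycle → w.length ≠ n

/-- `H` is `k`-degenerate: every non-empty (induced) subgraph contains a vertex of
degree at most `k` in it. -/
def Degenerate {α : Type*} (H : SimpleGraph α) (k : ℕ) : Prop :=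
  ∀ S : Set α, S.Nonempty → ∃ a ∈ S, {b | b ∈ S ∧ H.Adj a b}.ncard ≤ k

/-- `G` is co-locally `s`-colourable: for all vertices `u ≠ v`,
`χ(G[{u} ∪ N(v)]) ≤ s`. -/
def CoLocallyColorable {V : Type*} (G : SimpleGraph V) (s : ℕ) : Prop :=
  ∀ v u : V, u ≠ v → chromNum (G.induce (insert u (G.neighborSet v))) ≤ s

/-- The minimum of `χ(G[X])` over all subsets `X ⊆ V(G)` spanning exactly `p` colours
of `σ` (a rainbow cover of `σ` when `σ` uses exactly `p` colours). -/
noncomputable def minRainbowChrom {V : Type*} (G : SimpleGraph V) (σ : V → ℕ) (p : ℕ) : ℕ :=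
  sInf {c : ℕ | ∃ X : Set V, (σ '' X).ncard = p ∧ c = chromNum (G.induce X)}

/-- `f_G(p)`: the maximum, over all proper colourings `σ` of `G` using exactly `p`
colours, of the minimum chromatic number of a rainbow cover of `σ`. -/
noncomputable def fG {V : Type*} (G : SimpleGraph V) (p : ℕ) : ℕ :=
  sSup {m : ℕ | ∃ σ : V → ℕ, IsProperColoring G σ ∧ (σ '' Set.univ).ncard = p ∧
    m = minRainbowChrom G σ p}

/-- The closed neighbourhood `N[X]` of a set `X` of vertices. -/
def closedNbhd {V : Type*} (G : SimpleGraph V) (X : Set V) : Set V :=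
  X ∪ {u : V | ∃ x ∈ X, G.Adj x u}

/-!
If some non-empty `T ⊆ N(v)` had all degrees at least `ℓ - 1` inside `T`, a greedy walk would
find a path on `ℓ` vertices in `T`; since both of its ends are adjacent to `v`, closing it up
through `v` gives a cycle of length `ℓ + 1`.
-/

namespace SimpleGraph

variable {V : Type*} {G : SimpleGraph V}

theorem Walk.exists_adj_notMem_support {T : Set V} {x y : V} (q : G.Walk x y)
    (hlt : q.length < {b | b ∈ T ∧ G.Adj x b}.ncard) :
    ∃ z ∈ T, G.Adj x z ∧ z ∉ q.support := by
  classical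
  have htail : (q.support.tail.toFinset : Set V).ncard < {b | b ∈ T ∧ G.Adj x b}.ncard :=
    calc (q.support.tail.toFinset : Set V).ncard = q.support.tail.toFinset.card :=
          Set.ncard_coe_finset _
      _ ≤ q.support.tail.length := List.toFinset_card_le _
      _ = q.length := by simp
      _ < _ := hlt
  obtain ⟨z, ⟨hzT, hxz⟩, hz⟩ := Set.exists_mem_notMem_of_ncard_lt_ncard htail
  refine ⟨z, hzT, hxz, ?_⟩
  rw [← q.cons_tail_support, List.mem_cons]
  rintro (rfl | hz')
  exacts [G.irrefl hxz, hz (by simpa using hz')]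

theorem exists_isPath_length_of_le_ncard {T : Set V} (hT : T.Nonempty) {n : ℕ}
    (hdeg : ∀ x ∈ T, n ≤ {b | b ∈ T ∧ G.Adj x b}.ncard) :
    ∃ (x y : V) (q : G.Walk x y), q.IsPath ∧ q.length = n ∧ ∀ z ∈ q.support, z ∈ T := by
  suffices ∀ m ≤ n, ∃ (x y : V) (q : G.Walk x y),
      q.IsPath ∧ q.length = m ∧ ∀ z ∈ q.support, z ∈ T from this n le_rfl
  intro m hm
  induction m with
  | zero =>
    obtain ⟨x, hx⟩ := hT
    exact ⟨x, x, .nil, .nil, rfl, by simpa using hx⟩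
  | succ m ih =>
    obtain ⟨x, y, q, hq, hlen, hqT⟩ := ih (by omega)
    have hxT : x ∈ T := hqT x q.start_mem_support
    obtain ⟨z, hzT, hxz, hzq⟩ :=
      q.exists_adj_notMem_support (T := T) (by have := hdeg x hxT; omega)
    refine ⟨z, y, .cons hxz.symm q, (Walk.cons_isPath_iff _ _).2 ⟨hq, hzq⟩,
      by simp [hlen], ?_⟩
    simpa [hzT] using hqT

theorem Walk.IsPath.exists_isCycle_length_eq_add_two {v x y : V} {q : G.Walk x y} (hq : q.IsPath)
    (hlen : q.length ≠ 0) (hv : ∀ z ∈ q.support, G.Adj v z) :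
    ∃ (u : V) (c : G.Walk u u), c.IsCycle ∧ c.length = q.length + 2 := by
  have hvq : v ∉ q.support := fun h => G.irrefl (hv v h)
  have hxy : x ≠ y := by
    rintro rfl
    exact hlen (Walk.length_eq_zero_iff.2 (Walk.isPath_iff_nil.1 hq))
  have hp : (Walk.cons (hv x q.start_mem_support) q).IsPath :=
    (Walk.cons_isPath_iff _ _).2 ⟨hq, hvq⟩
  refine ⟨y, .cons (hv y q.end_mem_support).symm (.cons (hv x q.start_mem_support) q),
    (Walk.cons_isCycle_iff _ _).2 ⟨hp, ?_⟩, by simp⟩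
  rw [Walk.edges_cons, List.mem_cons, Sym2.eq_iff]
  rintro ((⟨rfl, -⟩ | ⟨hyx, -⟩) | he)
  exacts [hvq q.end_mem_support, hxy hyx.symm, hvq (q.snd_mem_support_of_mem_edges he)]

theorem degenerate_induce_of_forall_subset {s : Set V} {k : ℕ}
    (h : ∀ T ⊆ s, T.Nonempty → ∃ a ∈ T, {b | b ∈ T ∧ G.Adj a b}.ncard ≤ k) :
    Degenerate (G.induce s) k := by
  intro S hS
  obtain ⟨_, ⟨a, haS, rfl⟩, ha⟩ := h (Subtype.val '' S) (by simp) (hS.image _)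
  refine ⟨a, haS, ?_⟩
  have hnbr : {b | b ∈ Subtype.val '' S ∧ G.Adj a b} =
      Subtype.val '' {b | b ∈ S ∧ (G.induce s).Adj a b} := by
    ext; simp
  rwa [hnbr, Set.ncard_image_of_injective _ Subtype.val_injective] at ha

end SimpleGraph

theorem cycleFree_neighborhood_degenerate_general {V : Type*}
    (ℓ : ℕ) (hℓ : 2 ≤ ℓ) (G : SimpleGraph V) (hc : CycleLenFree G (ℓ + 1)) (v : V) :
    Degenerate (G.induce (G.neighborSet v)) (ℓ - 2) := by
  refine degenerate_induce_of_forall_subset fun T hTv hT => ?_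
  by_contra! hdeg
  obtain ⟨x, y, q, hq, hlen, hqT⟩ := exists_isPath_length_of_le_ncard (G := G) (n := ℓ - 1) hT
    fun a ha => by have := hdeg a ha; omega
  obtain ⟨u, c, hcyc, hclen⟩ :=
    hq.exists_isCycle_length_eq_add_two (by omega) fun z hz => hTv (hqT z hz)
  exact hc u c hcyc (by omega)

/-- For every integer `ℓ ≥ 2`, if `G` is a finite `C_{ℓ+1}`-free simple
graph and `v` any vertex, then the subgraph induced by the open neighbourhood `N(v)`
is `(ℓ-2)`-degenerate. -/
theorem cycleFree_neighborhood_degenerate {V : Type*} [Fintype V]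
    (ℓ : ℕ) (hℓ : 2 ≤ ℓ) (G : SimpleGraph V) (hc : CycleLenFree G (ℓ + 1)) (v : V) :
    Degenerate (G.induce (G.neighborSet v)) (ℓ - 2) :=
  cycleFree_neighborhood_degenerate_general ℓ hℓ G hc v
end

section
/- For every finite simple graph G with at least one vertex, the chromatic discrepancy satisfies φ(G) = min { p − f_G(p) : χ(G) ≤ p ≤ |V(G)| }. -/
open SimpleGraph

/-!
For a proper colouring `σ` with `q` colours, `φ_σ(G) = q - min {χ(G[X]) : X rainbow}`: a rainbow
set witnesses `≥`, and any `S` becomes rainbow after adding one vertex of each of the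
`q - |σ(S)|` missing colours, which raises `χ` by at most that much. Minimising over `σ`
grouped by `q`, the inner minimum becomes `q - f_G(q)`, and `q` ranges over `[χ(G), |V|]`
because a non-injective colouring can always gain one colour by recolouring one vertex.
-/

section ChromNum

variable {W : Type*} {H : SimpleGraph W}

lemma chromNum_le_of_colorable {n : ℕ} (h : H.Colorable n) : chromNum H ≤ n :=
  Nat.sInf_le h

variable [Finite W]

lemma colorable_chromNum (H : SimpleGraph W) : H.Colorable (chromNum H) :=
  have := Fintype.ofFinite W
  Nat.sInf_mem (s := {n | H.Colorable n}) ⟨_, H.colorable_of_fintype⟩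

lemma chromNum_le_ncard_range {α : Type*} {c : W → α}
    (hc : ∀ ⦃u v⦄, H.Adj u v → c u ≠ c v) :
    chromNum H ≤ (Set.range c).ncard := by
  have := Fintype.ofFinite (Set.range c)
  let C : H.Coloring (Set.range c) :=
    Coloring.mk (fun v => ⟨c v, v, rfl⟩) fun huv h => hc huv (congrArg Subtype.val h)
  rw [← Nat.card_coe_set_eq, Nat.card_eq_fintype_card]
  exact chromNum_le_of_colorable C.colorable

end ChromNum

section Induce

variable {V : Type*} (G : SimpleGraph V)

lemma chromNum_induce_le_ncard_image [Finite V] {σ : V → ℕ} (hσ : IsProperColoring G σ)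
    (S : Set V) : chromNum (G.induce S) ≤ (σ '' S).ncard := by
  rw [Set.image_eq_range]
  exact chromNum_le_ncard_range fun _ _ huv => hσ huv

lemma chromNum_induce_le_ncard [Finite V] (T : Set V) : chromNum (G.induce T) ≤ T.ncard := by
  conv_rhs => rw [← Subtype.range_coe (s := T)]
  exact chromNum_le_ncard_range fun _ _ huv => Subtype.coe_ne_coe.mpr huv.ne

lemma chromNum_induce_union_le [Finite V] (S T : Set V) :
    chromNum (G.induce (S ∪ T)) ≤ chromNum (G.induce S) + chromNum (G.induce T) := by
  classical
  obtain ⟨CS⟩ := colorable_chromNum (G.induce S)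
  obtain ⟨CT⟩ := colorable_chromNum (G.induce T)
  let C : (G.induce (S ∪ T)).Coloring
      (Fin (chromNum (G.induce S)) ⊕ Fin (chromNum (G.induce T))) :=
    Coloring.mk
      (fun x => if hx : x.1 ∈ T then .inr (CT ⟨x, hx⟩)
        else .inl (CS ⟨x, x.2.resolve_right hx⟩))
      fun {x y} hxy => by
        by_cases hx : x.1 ∈ T <;> by_cases hy : y.1 ∈ T <;>
          simp only [hx, hy, dite_true, dite_false, ne_eq, reduceCtorEq, not_false_eq_true,
            Sum.inl.injEq, Sum.inr.injEq]
        · exact CT.valid hxy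
        · exact CS.valid hxy
  simpa using chromNum_le_of_colorable C.colorable

end Induce

section ProperColoring

variable {V : Type*} [Finite V] {G : SimpleGraph V}

lemma IsProperColoring.exists_ncard_range_succ {σ : V → ℕ} (hσ : IsProperColoring G σ)
    (hlt : (Set.range σ).ncard < Nat.card V) :
    ∃ τ : V → ℕ, IsProperColoring G τ ∧
      (Set.range τ).ncard = (Set.range σ).ncard + 1 := by
  classical
  obtain ⟨u, v, huv, hσuv⟩ : ∃ u v, u ≠ v ∧ σ u = σ v := by
    by_contra! h
    exact hlt.ne (Set.ncard_range_of_injective fun u v e => by_contra fun hne => h u v hne e)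
  obtain ⟨N, hN⟩ := (Set.finite_range σ).exists_notMem
  have hfresh : ∀ x, σ x ≠ N := fun x hx => hN ⟨x, hx⟩
  refine ⟨Function.update σ v N, fun a b hab => ?_, ?_⟩
  · by_cases ha : a = v <;> by_cases hb : b = v
    · exact absurd (ha.trans hb.symm) hab.ne
    · simpa [ha, hb] using (hfresh b).symm
    · simpa [ha, hb] using hfresh a
    · simpa [ha, hb] using hσ hab
  · have hrange : Set.range (Function.update σ v N) = insert N (Set.range σ) := by
      refine Set.Subset.antisymm ?_ ?_
      · rintro _ ⟨x, rfl⟩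
        rcases eq_or_ne x v with rfl | hx <;> simp [*]
      · rintro _ (rfl | ⟨x, rfl⟩)
        · exact ⟨v, by simp⟩
        · rcases eq_or_ne x v with rfl | hx
          · exact ⟨u, by simp [huv, hσuv]⟩
          · exact ⟨x, by simp [hx]⟩
    rw [hrange, Set.ncard_insert_of_notMem hN]

lemma exists_isProperColoring_ncard_range_eq {p : ℕ} (hχp : chromNum G ≤ p)
    (hpn : p ≤ Nat.card V) :
    ∃ σ : V → ℕ, IsProperColoring G σ ∧ (Set.range σ).ncard = p := by
  induction p, hχp using Nat.le_induction with
  | base =>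
    obtain ⟨C⟩ := colorable_chromNum G
    have hσ : IsProperColoring G (fun v => (C v : ℕ)) := fun _ _ huv h => C.valid huv (Fin.ext h)
    refine ⟨_, hσ, le_antisymm ?_ (chromNum_le_ncard_range hσ)⟩
    calc (Set.range fun v => (C v : ℕ)).ncard ≤ (Set.Iio (chromNum G)).ncard :=
          Set.ncard_le_ncard (Set.range_subset_iff.mpr fun v => (C v).is_lt) (Set.finite_Iio _)
      _ = chromNum G := by simp
  | succ p _ ih =>
    obtain ⟨σ, hσ, hσp⟩ := ih (by omega)
    obtain ⟨τ, hτ, hτp⟩ := hσ.exists_ncard_range_succ (by omega)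
    exact ⟨τ, hτ, by omega⟩

end ProperColoring

section Discrepancy

variable {V : Type*} (G : SimpleGraph V) (σ : V → ℕ)

lemma minRainbowChrom_le {p : ℕ} {X : Set V} (hX : (σ '' X).ncard = p) :
    minRainbowChrom G σ p ≤ chromNum (G.induce X) :=
  Nat.sInf_le ⟨X, hX, rfl⟩

lemma exists_chromNum_induce_eq_minRainbowChrom {p : ℕ} {X : Set V} (hX : (σ '' X).ncard = p) :
    ∃ Y : Set V, (σ '' Y).ncard = p ∧ chromNum (G.induce Y) = minRainbowChrom G σ p := by
  obtain ⟨Y, hY, hYmin⟩ := Nat.sInf_mem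
    (s := {c | ∃ X : Set V, (σ '' X).ncard = p ∧ c = chromNum (G.induce X)})
    ⟨_, X, hX, rfl⟩
  exact ⟨Y, hY, hYmin.symm⟩

lemma minRainbowChrom_add_ncard_image_le [Finite V] (S : Set V) :
    minRainbowChrom G σ (Set.range σ).ncard + (σ '' S).ncard ≤
      chromNum (G.induce S) + (Set.range σ).ncard := by
  obtain ⟨T, hT, hTinj⟩ := Set.exists_image_eq_injOn_of_subset_range
    (Set.sdiff_subset : Set.range σ \ σ '' S ⊆ Set.range σ)
  have hsub : σ '' S ⊆ Set.range σ := Set.image_subset_range σ S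
  have hcover : σ '' (S ∪ T) = Set.range σ := by
    rw [Set.image_union, hT, Set.union_sdiff_cancel hsub]
  have hT_card : T.ncard + (σ '' S).ncard = (Set.range σ).ncard := by
    rw [← Set.ncard_sdiff_add_ncard_of_subset hsub, ← hT, hTinj.ncard_image]
  calc minRainbowChrom G σ (Set.range σ).ncard + (σ '' S).ncard
      ≤ chromNum (G.induce (S ∪ T)) + (σ '' S).ncard := by
        gcongr; exact minRainbowChrom_le G σ (by rw [hcover])
    _ ≤ chromNum (G.induce S) + T.ncard + (σ '' S).ncard := by
        gcongr
        exact (chromNum_induce_union_le G S T).trans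
          (Nat.add_le_add_left (chromNum_induce_le_ncard G T) _)
    _ ≤ chromNum (G.induce S) + (Set.range σ).ncard := by omega

theorem colDisc_eq [Finite V] :
    colDisc G σ = (Set.range σ).ncard - minRainbowChrom G σ (Set.range σ).ncard := by
  have hbound : ∀ z ∈ {z : ℤ | ∃ S : Set V, z = (σ '' S).ncard - chromNum (G.induce S)},
      z ≤ (Set.range σ).ncard - minRainbowChrom G σ (Set.range σ).ncard := by
    rintro _ ⟨S, rfl⟩
    have := minRainbowChrom_add_ncard_image_le G σ S
    omega
  obtain ⟨X, hX, hXmin⟩ :=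
    exists_chromNum_induce_eq_minRainbowChrom G σ (X := Set.univ) (by rw [Set.image_univ])
  refine le_antisymm (csSup_le ⟨_, ∅, rfl⟩ hbound) (le_csSup ⟨_, hbound⟩ ⟨X, ?_⟩)
  rw [hX, hXmin]

end Discrepancy

section fG

variable {V : Type*} [Finite V] (G : SimpleGraph V)

lemma bddAbove_fG_set (p : ℕ) : BddAbove {m : ℕ | ∃ σ : V → ℕ, IsProperColoring G σ ∧
    (σ '' Set.univ).ncard = p ∧ m = minRainbowChrom G σ p} := by
  refine ⟨p, ?_⟩
  rintro _ ⟨σ, hσ, hp, rfl⟩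
  exact (minRainbowChrom_le G σ hp).trans (hp ▸ chromNum_induce_le_ncard_image G hσ Set.univ)

lemma minRainbowChrom_le_fG {σ : V → ℕ} (hσ : IsProperColoring G σ) :
    minRainbowChrom G σ (Set.range σ).ncard ≤ fG G (Set.range σ).ncard :=
  le_csSup (bddAbove_fG_set G _) ⟨σ, hσ, by rw [Set.image_univ], rfl⟩

lemma exists_minRainbowChrom_eq_fG {p : ℕ} (hχp : chromNum G ≤ p) (hpn : p ≤ Nat.card V) :
    ∃ σ : V → ℕ, IsProperColoring G σ ∧ (Set.range σ).ncard = p ∧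
      minRainbowChrom G σ p = fG G p := by
  obtain ⟨σ, hσ, hp⟩ := exists_isProperColoring_ncard_range_eq hχp hpn
  obtain ⟨τ, hτ, hτp, hτf⟩ :=
    Nat.sSup_mem (s := {m : ℕ | ∃ σ : V → ℕ, IsProperColoring G σ ∧
      (σ '' Set.univ).ncard = p ∧ m = minRainbowChrom G σ p})
      ⟨_, σ, hσ, by rw [Set.image_univ, hp], rfl⟩ (bddAbove_fG_set G p)
  exact ⟨τ, hτ, by rwa [← Set.image_univ], hτf.symm⟩

end fG

theorem chromDisc_eq_min_fG_general {V : Type*} [Fintype V] (G : SimpleGraph V) :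
    chromDisc G = sInf {z : ℤ | ∃ p : ℕ, chromNum G ≤ p ∧ p ≤ Fintype.card V ∧
      z = (p : ℤ) - (fG G p : ℤ)} := by
  apply csInf_eq_csInf_of_forall_exists_le
  · rintro _ ⟨σ, hσ, rfl⟩
    have hn : (Set.range σ).ncard ≤ Fintype.card V := by
      rw [← Nat.card_eq_fintype_card, ← Nat.card_coe_set_eq]
      exact Finite.card_range_le σ
    refine ⟨_, ⟨_, chromNum_le_ncard_range hσ, hn, rfl⟩, ?_⟩
    have := minRainbowChrom_le_fG G hσ
    rw [colDisc_eq]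
    omega
  · rintro _ ⟨p, hχp, hpn, rfl⟩
    obtain ⟨σ, hσ, rfl, hσf⟩ :=
      exists_minRainbowChrom_eq_fG G hχp (by rwa [Nat.card_eq_fintype_card])
    exact ⟨_, ⟨σ, hσ, rfl⟩, by rw [colDisc_eq, hσf]⟩

/-- For every finite simple graph `G` with at least one vertex,
`φ(G) = min { p - f_G(p) : χ(G) ≤ p ≤ |V(G)| }`. -/
theorem chromDisc_eq_min_fG {V : Type*} [Fintype V] [Nonempty V] (G : SimpleGraph V) :
    chromDisc G = sInf {z : ℤ | ∃ p : ℕ, chromNum G ≤ p ∧ p ≤ Fintype.card V ∧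
      z = (p : ℤ) - (fG G p : ℤ)} :=
  chromDisc_eq_min_fG_general G
end

section
/- Let G be a finite simple graph with at least one vertex, let k ≥ 0 be an integer, let p = χ(G) + k, and let σ be a proper colouring of G using exactly p colours. Then there exists a vertex v ∈ V(G) such that the closed neighbourhood N[v] spans at least p/(k+1) colours of σ, i.e. |σ(N[v])| ≥ p/(k+1). -/
open SimpleGraph

private lemma exists_disjoint_subsets (m w : ℕ) :
    ∀ S : Finset ℕ, m * w ≤ S.card →
    ∃ f : Fin m → Finset ℕ,
      (∀ i, f i ⊆ S) ∧ (∀ i, (f i).card = w) ∧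
      (∀ i j, i ≠ j → Disjoint (f i) (f j)) := by
  induction m with
  | zero =>
      intro S _
      exact ⟨fun i => i.elim0, fun i => i.elim0, fun i => i.elim0, fun i => i.elim0⟩
  | succ n ih =>
      intro S hS
      have hw : w ≤ S.card := by
        have h1 : w ≤ (n + 1) * w := Nat.le_mul_of_pos_left w (Nat.succ_pos n)
        omega
      obtain ⟨T, hTS, hTcard⟩ := Finset.exists_subset_card_eq hw
      have hrest : n * w ≤ (S \ T).card := by
        rw [Finset.card_sdiff_of_subset hTS, hTcard]
        have e : (n + 1) * w = n * w + w := by ring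
        omega
      obtain ⟨f', hf'sub, hf'card, hf'disj⟩ := ih (S \ T) hrest
      refine ⟨Fin.cons T f', ?_, ?_, ?_⟩
      · intro i
        refine Fin.cases ?_ ?_ i
        · simpa using hTS
        · intro j
          simp only [Fin.cons_succ]
          exact (hf'sub j).trans (Finset.sdiff_subset)
      · intro i
        refine Fin.cases ?_ ?_ i
        · simpa using hTcard
        · intro j
          simpa using hf'card j
      · intro i j hij
        rcases Fin.eq_zero_or_eq_succ i with hi | ⟨i', rfl⟩ <;>
          rcases Fin.eq_zero_or_eq_succ j with hj | ⟨j', rfl⟩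
        · exact absurd (hi.trans hj.symm) hij
        · subst hi
          simp only [Fin.cons_zero, Fin.cons_succ]
          rw [Finset.disjoint_left]
          intro a haT haf
          exact (Finset.mem_sdiff.mp (hf'sub j' haf)).2 haT
        · subst hj
          simp only [Fin.cons_zero, Fin.cons_succ]
          rw [Finset.disjoint_right]
          intro a haT haf
          exact (Finset.mem_sdiff.mp (hf'sub i' haf)).2 haT
        · simp only [Fin.cons_succ]
          refine hf'disj i' j' ?_
          intro h
          exact hij (by rw [h])

/-- Let `G` be a finite graph with at least one vertex, `k ≥ 0`,
`p = χ(G)+k`, and `σ` a proper colouring of `G` using exactly `p` colours. Then some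
vertex `v` satisfies `|σ(N[v])| ≥ p/(k+1)`. -/
theorem exists_vertex_spanning_colours {V : Type*} [Fintype V] [Nonempty V]
    (G : SimpleGraph V) (k : ℕ) (σ : V → ℕ) (hσ : IsProperColoring G σ)
    (hp : (σ '' Set.univ).ncard = chromNum G + k) :
    ∃ v : V, ((σ '' (insert v (G.neighborSet v))).ncard : ℝ) ≥
      ((chromNum G + k : ℕ) : ℝ) / (k + 1) := by
  classical
  by_contra hcon
  push_neg at hcon
  set χ : ℕ := chromNum G with hχdef
  set PF : Finset ℕ := Finset.univ.image σ with hPFdef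
  set p : ℕ := PF.card with hpdef
  have hPFcoe : (PF : Set ℕ) = σ '' Set.univ := by
    rw [hPFdef]; simp
  have hPF : (σ '' Set.univ).ncard = p := by
    rw [← hPFcoe, Set.ncard_coe_finset]
  have hpχ : p = χ + k := hPF.symm.trans hp
  -- seen colours in closed neighbourhoods, as Finsets
  set SEEN : V → Finset ℕ :=
    fun v => (Finset.univ.filter (fun x => x = v ∨ G.Adj v x)).image σ with hSEENdef
  have hSEENcoe : ∀ v : V, ((SEEN v : Finset ℕ) : Set ℕ) = σ '' (insert v (G.neighborSet v)) := by
    intro v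
    rw [hSEENdef]
    rw [Finset.coe_image]
    ext x
    simp [Set.mem_insert_iff]
  have hSEEN : ∀ v : V, (σ '' (insert v (G.neighborSet v))).ncard = (SEEN v).card := by
    intro v
    rw [← hSEENcoe v, Set.ncard_coe_finset]
  have hσself : ∀ v : V, σ v ∈ SEEN v := by
    intro v
    rw [hSEENdef]
    exact Finset.mem_image_of_mem σ (Finset.mem_filter.mpr ⟨Finset.mem_univ v, Or.inl rfl⟩)
  have hnbSEEN : ∀ u w : V, G.Adj u w → σ w ∈ SEEN u := by
    intro u w h
    rw [hSEENdef]
    exact Finset.mem_image_of_mem σ (Finset.mem_filter.mpr ⟨Finset.mem_univ w, Or.inr h⟩)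
  -- numeric consequences of the contradiction hypothesis
  have hcard : ∀ v : V, (SEEN v).card * (k + 1) + 1 ≤ χ + k := by
    intro v
    have h1 := hcon v
    rw [hSEEN v] at h1
    have hkpos : (0 : ℝ) < (k : ℝ) + 1 := by positivity
    rw [lt_div_iff₀ hkpos] at h1
    have h4 : (SEEN v).card * (k + 1) < χ + k := by exact_mod_cast h1
    omega
  set z : ℕ := Finset.univ.sup (fun v => (SEEN v).card) with hzdef
  have hzle : ∀ v : V, (SEEN v).card ≤ z := fun v =>
    Finset.le_sup (f := fun v => (SEEN v).card) (Finset.mem_univ v)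
  obtain ⟨v0, -, hv0⟩ :=
    Finset.exists_mem_eq_sup Finset.univ Finset.univ_nonempty (fun v : V => (SEEN v).card)
  rw [← hzdef] at hv0
  have hz1 : 1 ≤ z := by
    have h1 : 0 < (SEEN v0).card := Finset.card_pos.mpr ⟨σ v0, hσself v0⟩
    rw [hv0]
    omega
  obtain ⟨zk, hzkdef⟩ : ∃ t : ℕ, t = z * k := ⟨_, rfl⟩
  have hzk2 : zk + z + 1 ≤ χ + k := by
    have h := hcard v0
    rw [← hv0] at h
    rw [show z * (k + 1) = zk + z from by rw [hzkdef]; ring] at h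
    omega
  have hkzk : k ≤ zk := by
    rw [hzkdef]
    exact Nat.le_mul_of_pos_left k hz1
  have hχz : z + 1 ≤ χ := by omega
  -- choose k+1 pairwise disjoint z-subsets of the colour set
  have hle : (k + 1) * z ≤ PF.card := by
    rw [← hpdef, show (k + 1) * z = zk + z from by rw [hzkdef]; ring]
    omega
  obtain ⟨g, hgsub, hgcard, hgdisj⟩ := exists_disjoint_subsets (k + 1) z PF hle
  have hgne : ∀ i : Fin (k + 1), (g i).Nonempty := by
    intro i
    rw [← Finset.card_pos, hgcard i]
    omega
  set d : Fin (k + 1) → ℕ := fun i => (g i).min' (hgne i) with hddef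
  have hdmem : ∀ i, d i ∈ g i := fun i => (g i).min'_mem (hgne i)
  have hdinj : Function.Injective d := by
    intro i j hij
    by_contra hne
    exact (Finset.disjoint_left.mp (hgdisj i j hne)) (hdmem i) (hij ▸ hdmem j)
  set Dfin : Finset ℕ := Finset.univ.image d with hDdef
  have hDmemd : ∀ i, d i ∈ Dfin := fun i => by
    rw [hDdef]; exact Finset.mem_image_of_mem d (Finset.mem_univ i)
  have hDcard : Dfin.card = k + 1 := by
    rw [hDdef, Finset.card_image_of_injective _ hdinj, Finset.card_univ, Fintype.card_fin]
  have hDsub : Dfin ⊆ PF := by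
    intro x hx
    rw [hDdef] at hx
    obtain ⟨i, -, rfl⟩ := Finset.mem_image.mp hx
    exact hgsub i (hdmem i)
  set pool : Fin (k + 1) → Finset ℕ := fun i => (g i).erase (d i) with hpooldef
  have hpoolcard : ∀ i, (pool i).card = z - 1 := by
    intro i
    rw [hpooldef]
    rw [Finset.card_erase_of_mem (hdmem i), hgcard i]
  have hpoolsub : ∀ i, pool i ⊆ g i := fun i => Finset.erase_subset _ _
  have hpoolPF : ∀ i, pool i ⊆ PF := fun i => (hpoolsub i).trans (hgsub i)
  have hpoolD : ∀ i, ∀ x ∈ pool i, x ∉ Dfin := by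
    intro i x hx hxD
    rw [hDdef] at hxD
    obtain ⟨j, -, rfl⟩ := Finset.mem_image.mp hxD
    by_cases hij : j = i
    · subst hij
      rw [hpooldef] at hx
      exact (Finset.ne_of_mem_erase hx) rfl
    · exact (Finset.disjoint_left.mp (hgdisj j i hij)) (hdmem j) (hpoolsub i hx)
  have hpooldisj : ∀ i j, i ≠ j → Disjoint (pool i) (pool j) := fun i j hij =>
    Finset.disjoint_of_subset_left (hpoolsub i)
      (Finset.disjoint_of_subset_right (hpoolsub j) (hgdisj i j hij))
  -- index of a colour of Dfin
  set idx : ℕ → Fin (k + 1) :=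
    fun c => if hc : ∃ i, d i = c then hc.choose else ⟨0, Nat.succ_pos k⟩ with hidxdef
  have hidx : ∀ c ∈ Dfin, d (idx c) = c := by
    intro c hc
    rw [hDdef] at hc
    obtain ⟨i, -, hi⟩ := Finset.mem_image.mp hc
    have he : ∃ i, d i = c := ⟨i, hi⟩
    rw [hidxdef]
    simp only [dif_pos he]
    exact he.choose_spec
  have hPFD : (PF \ Dfin).card = p - (k + 1) := by
    rw [Finset.card_sdiff_of_subset hDsub, hDcard, ← hpdef]
  -- free recolouring choice is available
  have hfree : ∀ u : V, σ u ∈ Dfin → ((PF \ Dfin) \ SEEN u).Nonempty := by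
    intro u hu
    have hsub : (PF \ Dfin) ∩ SEEN u ⊆ (SEEN u).erase (σ u) := by
      intro x hx
      rw [Finset.mem_inter] at hx
      rw [Finset.mem_erase]
      refine ⟨?_, hx.2⟩
      rintro rfl
      exact (Finset.mem_sdiff.mp hx.1).2 hu
    have h1 : ((PF \ Dfin) ∩ SEEN u).card ≤ z - 1 := by
      calc ((PF \ Dfin) ∩ SEEN u).card ≤ ((SEEN u).erase (σ u)).card :=
            Finset.card_le_card hsub
        _ = (SEEN u).card - 1 := Finset.card_erase_of_mem (hσself u)
        _ ≤ z - 1 := by have := hzle u; omega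
    have h2 : ((PF \ Dfin) ∩ SEEN u).card + ((PF \ Dfin) \ SEEN u).card = (PF \ Dfin).card :=
      Finset.card_inter_add_card_sdiff _ _
    rw [← Finset.card_pos]
    omega
  -- pooled recolouring choice is available
  have hpoolfree : ∀ u : V, σ u ∈ Dfin → ¬ (SEEN u ∩ Dfin ⊆ {σ u}) →
      (pool (idx (σ u)) \ SEEN u).Nonempty := by
    intro u hu hcond
    obtain ⟨x, hxmem, hxne⟩ := Finset.not_subset.mp hcond
    rw [Finset.mem_singleton] at hxne
    have hσuD : σ u ∈ SEEN u ∩ Dfin := Finset.mem_inter.mpr ⟨hσself u, hu⟩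
    have h2card : 2 ≤ (SEEN u ∩ Dfin).card :=
      Finset.one_lt_card.mpr ⟨x, hxmem, σ u, hσuD, hxne⟩
    have hid : (SEEN u ∩ Dfin).card + (SEEN u \ Dfin).card = (SEEN u).card :=
      Finset.card_inter_add_card_sdiff _ _
    have hSD : (SEEN u \ Dfin).card ≤ z - 2 := by
      have := hzle u; omega
    have hPS : pool (idx (σ u)) ∩ SEEN u ⊆ SEEN u \ Dfin := by
      intro y hy
      rw [Finset.mem_inter] at hy
      exact Finset.mem_sdiff.mpr ⟨hy.2, hpoolD _ y hy.1⟩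
    have h3 : (pool (idx (σ u)) ∩ SEEN u).card + (pool (idx (σ u)) \ SEEN u).card =
        (pool (idx (σ u))).card := Finset.card_inter_add_card_sdiff _ _
    have h4 : (pool (idx (σ u)) ∩ SEEN u).card ≤ z - 2 :=
      le_trans (Finset.card_le_card hPS) hSD
    have h5 := hpoolcard (idx (σ u))
    have h6 : (SEEN u ∩ Dfin).card ≤ (SEEN u).card :=
      Finset.card_le_card Finset.inter_subset_left
    have h7 := hzle u
    rw [← Finset.card_pos]
    omega
  -- the recolouring
  set newc : V → ℕ := fun u =>
    if hu : σ u ∈ Dfin then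
      if hcond : SEEN u ∩ Dfin ⊆ {σ u} then (hfree u hu).choose
      else (hpoolfree u hu hcond).choose
    else σ u with hnewcdef
  have hkeep : ∀ u : V, σ u ∉ Dfin → newc u = σ u := by
    intro u hu
    rw [hnewcdef]
    simp only [dif_neg hu]
  have hrec_notseen : ∀ u : V, σ u ∈ Dfin → newc u ∉ SEEN u := by
    intro u hu
    rw [hnewcdef]
    simp only [dif_pos hu]
    by_cases hcond : SEEN u ∩ Dfin ⊆ {σ u}
    · rw [dif_pos hcond]
      exact (Finset.mem_sdiff.mp (hfree u hu).choose_spec).2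
    · rw [dif_neg hcond]
      exact (Finset.mem_sdiff.mp (hpoolfree u hu hcond).choose_spec).2
  have hrec_pool : ∀ u : V, (hu : σ u ∈ Dfin) → (hcond : ¬ (SEEN u ∩ Dfin ⊆ {σ u})) →
      newc u ∈ pool (idx (σ u)) := by
    intro u hu hcond
    rw [hnewcdef]
    simp only [dif_pos hu, dif_neg hcond]
    exact (Finset.mem_sdiff.mp (hpoolfree u hu hcond).choose_spec).1
  have hmem : ∀ u : V, newc u ∈ PF \ Dfin := by
    intro u
    by_cases hu : σ u ∈ Dfin
    · by_cases hcond : SEEN u ∩ Dfin ⊆ {σ u}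
      · have : newc u ∈ (PF \ Dfin) \ SEEN u := by
          rw [hnewcdef]
          simp only [dif_pos hu, dif_pos hcond]
          exact (hfree u hu).choose_spec
        exact (Finset.mem_sdiff.mp this).1
      · have h1 := hrec_pool u hu hcond
        exact Finset.mem_sdiff.mpr ⟨hpoolPF _ h1, hpoolD _ _ h1⟩
    · rw [hkeep u hu]
      refine Finset.mem_sdiff.mpr ⟨?_, hu⟩
      rw [hPFdef]
      exact Finset.mem_image_of_mem σ (Finset.mem_univ u)
  -- the recolouring is proper
  have hproper : ∀ u w : V, G.Adj u w → newc u ≠ newc w := by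
    intro u w hadj
    by_cases hu : σ u ∈ Dfin <;> by_cases hw : σ w ∈ Dfin
    · have hσne : σ u ≠ σ w := hσ hadj
      have hcondu : ¬ (SEEN u ∩ Dfin ⊆ {σ u}) := by
        intro hsub
        have h1 : σ w ∈ SEEN u ∩ Dfin := Finset.mem_inter.mpr ⟨hnbSEEN u w hadj, hw⟩
        exact hσne (Finset.mem_singleton.mp (hsub h1)).symm
      have hcondw : ¬ (SEEN w ∩ Dfin ⊆ {σ w}) := by
        intro hsub
        have h1 : σ u ∈ SEEN w ∩ Dfin := Finset.mem_inter.mpr ⟨hnbSEEN w u hadj.symm, hu⟩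
        exact hσne (Finset.mem_singleton.mp (hsub h1))
      have h1 := hrec_pool u hu hcondu
      have h2 := hrec_pool w hw hcondw
      have hij : idx (σ u) ≠ idx (σ w) := by
        intro he
        apply hσne
        rw [← hidx _ hu, ← hidx _ hw, he]
      intro heq
      exact (Finset.disjoint_left.mp (hpooldisj _ _ hij)) h1 (heq ▸ h2)
    · rw [hkeep w hw]
      intro heq
      exact hrec_notseen u hu (heq ▸ hnbSEEN u w hadj)
    · rw [hkeep u hu]
      intro heq
      exact hrec_notseen w hw (heq.symm ▸ hnbSEEN w u hadj.symm)
    · rw [hkeep u hu, hkeep w hw]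
      exact hσ hadj
  -- build the coloring and conclude
  let C : G.Coloring (PF \ Dfin : Finset ℕ) :=
    SimpleGraph.Coloring.mk (fun v => ⟨newc v, hmem v⟩)
      (fun {v w} hadj heq => hproper v w hadj (congrArg Subtype.val heq))
  have hcol : G.Colorable ((PF \ Dfin).card) := by
    have h1 := C.colorable
    rwa [Fintype.card_coe] at h1
  have hχle : χ ≤ (PF \ Dfin).card := by
    rw [hχdef]
    exact Nat.sInf_le hcol
  rw [hPFD] at hχle
  omega
end

section
/- For every integer ℓ ≥ 3, every finite C_{ℓ+1}-free simple graph G is co-locally (ℓ−1)-colourable, i.e. for every vertex v and every vertex u ≠ v, χ(G[{u} ∪ N(v)]) ≤ ℓ−1. -/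
open SimpleGraph

/-!
Fix `u ≠ v` and suppose some set `T ⊆ {u} ∪ N(v)` induces a subgraph of minimum degree at least
`ℓ - 1 ≥ 2`. A maximal path of `G[T]`, grown from `u` when `u ∈ T`, yields a path on `ℓ`
vertices of `T` whose two ends differ from `u`: either its first `ℓ` vertices or, when it has
exactly `ℓ` vertices (so that its first vertex is adjacent to all the others), the path obtained
by moving that first vertex to the back. Both ends are then neighbours of `v`, and `v` closes a
cycle of length `ℓ + 1`. Hence `G[{u} ∪ N(v)]` is `(ℓ - 2)`-degenerate, and greedy colouring
uses at most `ℓ - 1` colours.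
-/

namespace Degenerate

variable {α : Type*} [Finite α] {H : SimpleGraph α} {k : ℕ}

theorem exists_coloring_on (hH : Degenerate H k) (S : Set α) :
    ∃ f : α → Fin (k + 1), ∀ ⦃x⦄, x ∈ S → ∀ ⦃y⦄, y ∈ S → H.Adj x y → f x ≠ f y := by
  classical
  induction hn : S.ncard using Nat.strong_induction_on generalizing S with
  | _ n ih =>
    rcases S.eq_empty_or_nonempty with rfl | hS
    · exact ⟨0, by simp⟩
    obtain ⟨a, haS, hdeg⟩ := hH S hS
    obtain ⟨f, hf⟩ := ih _ (hn ▸ Set.ncard_sdiff_singleton_lt_of_mem haS) (S \ {a}) rfl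
    set N := {b | b ∈ S ∧ H.Adj a b}
    obtain ⟨c, hc⟩ : ∃ c, c ∉ f '' N := by
      by_contra! hall
      have hcard := (Set.eq_univ_iff_ncard _).1 (Set.eq_univ_of_forall hall)
      rw [Nat.card_eq_fintype_card, Fintype.card_fin] at hcard
      have := (Set.ncard_image_le (f := f) (s := N)).trans hdeg
      omega
    refine ⟨Function.update f a c, fun x hx y hy hxy => ?_⟩
    by_cases hxa : x = a <;> by_cases hya : y = a
    · exact absurd hxy (hxa ▸ hya ▸ H.loopless.irrefl a)
    · subst hxa
      simpa [hya] using fun h => hc ⟨y, ⟨hy, hxy⟩, h.symm⟩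
    · subst hya
      simpa [hxa] using fun h => hc ⟨x, ⟨hx, hxy.symm⟩, h⟩
    · simpa [hxa, hya] using hf ⟨hx, hxa⟩ ⟨hy, hya⟩ hxy

theorem colorable (hH : Degenerate H k) : H.Colorable (k + 1) :=
  let ⟨f, hf⟩ := hH.exists_coloring_on Set.univ
  ⟨Coloring.mk f fun hxy => hf trivial trivial hxy⟩

end Degenerate

section Paths

variable {V : Type*} {G : SimpleGraph V}

theorem SimpleGraph.Walk.IsPath.isCycle_cons_concat {a b v : V} {p : G.Walk a b}
    (hp : p.IsPath) (hlen : p.length ≠ 0) (hv : v ∉ p.support) (ha : G.Adj v a)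
    (hb : G.Adj b v) : (Walk.cons ha (p.concat hb)).IsCycle := by
  refine (Walk.cons_isCycle_iff _ _).2 ⟨hp.concat hv hb, fun he => ?_⟩
  rw [Walk.edges_concat, List.concat_eq_append, List.mem_append, List.mem_singleton] at he
  rcases he with he | he
  · exact hv (p.fst_mem_support_of_mem_edges he)
  · rcases Sym2.eq_iff.1 he with ⟨rfl, -⟩ | ⟨-, rfl⟩
    · exact hv p.end_mem_support
    · exact hlen (by simp [show p = .nil from congrArg Subtype.val (Path.loop_eq ⟨p, hp⟩)])

theorem CycleLenFree.isPath_length_ne {n : ℕ} (hG : CycleLenFree G (n + 2)) {a b v : V}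
    {p : G.Walk a b} (hp : p.IsPath) (hn : n ≠ 0) (hv : v ∉ p.support) (ha : G.Adj v a)
    (hb : G.Adj b v) : p.length ≠ n := fun hlen =>
  hG v _ (hp.isCycle_cons_concat (hlen ▸ hn) hv ha hb) (by simp [hlen])

theorem SimpleGraph.exists_isPath_forall_adj_mem_support [Finite V] {T : Set V} {a : V}
    (ha : a ∈ T) :
    ∃ (z : V) (p : G.Walk z a), p.IsPath ∧ (∀ w ∈ p.support, w ∈ T) ∧
      ∀ y ∈ T, G.Adj z y → y ∈ p.support := by
  have := Fintype.ofFinite V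
  by_contra! hext
  have hgrow : ∀ n, ∃ (z : V) (p : G.Walk z a), p.IsPath ∧ (∀ w ∈ p.support, w ∈ T) ∧
      p.length = n := by
    intro n
    induction n with
    | zero => exact ⟨a, .nil, .nil, by simpa, rfl⟩
    | succ n ih =>
      obtain ⟨z, p, hp, hpT, rfl⟩ := ih
      obtain ⟨y, hyT, hzy, hy⟩ := hext z p hp hpT
      exact ⟨y, .cons hzy.symm p, hp.cons hy, by simpa [hyT] using hpT, rfl⟩
  obtain ⟨z, p, hp, -, hlen⟩ := hgrow (Fintype.card V)
  exact hp.length_lt.ne hlen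

theorem SimpleGraph.exists_isPath_length_eq_of_le_ncard [Finite V] {d : ℕ} (hd : 2 ≤ d)
    {T : Set V} (hT : T.Nonempty) (hdeg : ∀ x ∈ T, d ≤ (T ∩ G.neighborSet x).ncard) (u : V) :
    ∃ (x y : V) (q : G.Walk x y), q.IsPath ∧ (∀ w ∈ q.support, w ∈ T) ∧ q.length = d ∧
      x ≠ u ∧ y ≠ u := by
  classical
  -- Growing the path from `u` leaves `u` only at its far end.
  obtain ⟨a, haT, hau⟩ : ∃ a ∈ T, u ∈ T → u = a := by
    by_cases hu : u ∈ T
    · exact ⟨u, hu, fun _ => rfl⟩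
    · exact ⟨hT.some, hT.some_mem, fun h => absurd h hu⟩
  have hne_u : ∀ w ∈ T, w ≠ a → w ≠ u := fun w hw hwa hwu => hwa (hwu ▸ hau (hwu ▸ hw))
  obtain ⟨z, p, hp, hpT, hmax⟩ := exists_isPath_forall_adj_mem_support (G := G) haT
  have hnbr : T ∩ G.neighborSet z ⊆ {w | w ∈ p.support.tail} := by
    rintro y ⟨hyT, hzy⟩
    have hy := hmax y hyT hzy
    rw [← p.cons_tail_support, List.mem_cons] at hy
    exact hy.resolve_left hzy.ne'
  have hcard : {w | w ∈ p.support.tail}.ncard ≤ p.length := by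
    rw [← List.coe_toFinset, Set.ncard_coe_finset]
    simpa using p.support.tail.toFinset_card_le
  have hzT : z ∈ T := hpT z p.start_mem_support
  have hlen : d ≤ p.length := (hdeg z hzT).trans ((Set.ncard_le_ncard hnbr).trans hcard)
  have hvert_ne : ∀ i < p.length, p.getVert i ≠ a := fun i hi h =>
    hi.ne (hp.getVert_injOn (Set.mem_ofPred.2 hi.le) (Set.mem_ofPred.2 le_rfl)
      (h.trans p.getVert_length.symm))
  have hzu : z ≠ u := hne_u z hzT (p.getVert_zero ▸ hvert_ne 0 (by omega))
  rcases hlen.lt_or_eq with hlt | heq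
  · refine ⟨z, p.getVert d, p.take d, hp.take d, fun w hw => hpT w ?_, by simp [hlt.le], hzu,
      hne_u _ (hpT _ (p.getVert_mem_support d)) (hvert_ne d hlt)⟩
    rw [Walk.support_take] at hw
    exact List.mem_of_mem_take hw
  · have hnil : ¬ p.Nil := Walk.not_nil_iff_lt_length.2 (by omega)
    -- `z` has `d` neighbours among the `d` other vertices of `p`, so it sees all of them.
    have hza : G.Adj z a := by
      have := Set.eq_of_subset_of_ncard_le hnbr (by have := hdeg z hzT; omega)
      exact (this.symm ▸ p.end_mem_tail_support hnil : a ∈ T ∩ G.neighborSet z).2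
    have hz_tail : z ∉ p.support.tail :=
      (List.nodup_cons.1 (p.cons_tail_support ▸ hp.support_nodup)).1
    rw [← Walk.support_tail_of_not_nil _ hnil] at hz_tail
    refine ⟨p.snd, z, p.tail.concat hza.symm, hp.tail.concat hz_tail _, fun w hw => ?_,
      by simp; omega, hne_u _ (hpT _ (p.getVert_mem_support 1)) (hvert_ne 1 (by omega)), hzu⟩
    rw [Walk.support_concat, List.mem_append, List.mem_singleton,
      Walk.support_tail_of_not_nil _ hnil] at hw
    exact hw.elim (fun hw => hpT w (List.mem_of_mem_tail hw)) (· ▸ hzT)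

theorem CycleLenFree.degenerate_induce_insert_neighborSet [Finite V] {ℓ : ℕ} (hℓ : 3 ≤ ℓ)
    (hc : CycleLenFree G (ℓ + 1)) {u v : V} (huv : u ≠ v) :
    Degenerate (G.induce (insert u (G.neighborSet v))) (ℓ - 2) := by
  intro S hS
  by_contra! hdeg
  set T := Subtype.val '' S
  have hTdeg : ∀ x ∈ T, ℓ - 1 ≤ (T ∩ G.neighborSet x).ncard := by
    rintro _ ⟨a, haS, rfl⟩
    have hnbr : T ∩ G.neighborSet a =
        Subtype.val '' {b | b ∈ S ∧ (G.induce (insert u (G.neighborSet v))).Adj a b} := by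
      ext w
      simp [T]
    rw [hnbr, Set.ncard_image_of_injective _ Subtype.val_injective]
    exact (show ℓ - 1 ≤ ℓ - 2 + 1 by omega).trans (hdeg a haS)
  obtain ⟨x, y, q, hq, hqT, hlen, hxu, hyu⟩ :=
    exists_isPath_length_eq_of_le_ncard (by omega) (hS.image _) hTdeg u
  have hTv : ∀ w ∈ T, w ≠ u → G.Adj v w := by
    rintro _ ⟨⟨w, hw⟩, -, rfl⟩ hwu
    exact (Set.mem_insert_iff.1 hw).resolve_left hwu
  have hc' : CycleLenFree G (ℓ - 1 + 2) := by rwa [show ℓ - 1 + 2 = ℓ + 1 by omega]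
  refine hc'.isPath_length_ne hq (by omega) (fun hv => ?_) (hTv x (hqT x q.start_mem_support) hxu)
    (hTv y (hqT y q.end_mem_support) hyu).symm hlen
  by_cases hvu : v = u
  · exact huv hvu.symm
  · exact G.loopless.irrefl v (hTv v (hqT v hv) hvu)

end Paths

/-- For every integer `ℓ ≥ 3`, every finite `C_{ℓ+1}`-free graph `G` is
co-locally `(ℓ-1)`-colourable. -/
theorem cycleFree_coLocallyColourable {V : Type*} [Fintype V]
    (ℓ : ℕ) (hℓ : 3 ≤ ℓ) (G : SimpleGraph V) (hc : CycleLenFree G (ℓ + 1)) :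
    ∀ v u : V, u ≠ v → chromNum (G.induce (insert u (G.neighborSet v))) ≤ ℓ - 1 := by
  intro v u huv
  have hcol := (hc.degenerate_induce_insert_neighborSet hℓ huv).colorable
  exact Nat.sInf_le (by rwa [show ℓ - 2 + 1 = ℓ - 1 by omega] at hcol)
end
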